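/- For permutations v, w of {1,...,n} written in one-line notation (v_1,...,v_n), the Bruhat order (transitive closure of transpositions that increase the number of inversions by any amount, i.e., v ≤ w when w is obtained from v by a sequence of swaps putting larger values earlier) coincides with the Deodhar order: for every k, the non-increasing rearrangement of (v_1,...,v_k) is entrywise at most that of (w_1,...,w_k). -/

import Mathlib

/-- coinv: number of pairs i < j with 0 < a i < a j. -/
def coinv (n : ℕ) (a : Fin n → ℕ) : ℕ :=
  (Finset.univ.filter (fun p : Fin n × Fin n => p.1 < p.2 ∧ 0 < a p.1 ∧ a p.1 < a p.2)).card

/-- Length of a rook-monoid sequence: ∑_{i : a_i ≠ 0} (a_i + n - i) - coinv (1-based i). -/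
def rookLen (n : ℕ) (a : Fin n → ℕ) : ℤ :=
  (∑ i : Fin n, if a i ≠ 0 then ((a i : ℤ) + n - (i.val + 1)) else 0) - coinv n a

/-- A rook-monoid sequence: entries in {0,...,n} with distinct nonzero entries. -/
def IsRook (n : ℕ) (a : Fin n → ℕ) : Prop :=
  (∀ i, a i ≤ n) ∧ ∀ i j : Fin n, i ≠ j → a i ≠ 0 → a i ≠ a j

/-- Non-increasing rearrangement of a list. -/
def sortDesc (l : List ℕ) : List ℕ := l.insertionSort (· ≥ ·)

/-- Containment order: entrywise comparison of non-increasing rearrangements. -/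
def contLE (l m : List ℕ) : Prop := List.Forall₂ (· ≤ ·) (sortDesc l) (sortDesc m)

/-- Deodhar order: containment of all truncations. -/
def deodharLE (n : ℕ) (x y : Fin n → ℕ) : Prop :=
  ∀ k : ℕ, k ≤ n → contLE ((List.ofFn x).take k) ((List.ofFn y).take k)

/-- One-line notation for a permutation of {1,...,n}. -/
def IsOneLine (n : ℕ) (v : Fin n → ℕ) : Prop :=
  (∀ i, 1 ≤ v i ∧ v i ≤ n) ∧ Function.Injective v

/-- Elementary Bruhat move: swap positions i < j with v i < v j. -/
def bruhatStep (n : ℕ) (v w : Fin n → ℕ) : Prop :=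
  ∃ i j : Fin n, i < j ∧ v i < v j ∧ w i = v j ∧ w j = v i ∧
    ∀ k, k ≠ i → k ≠ j → w k = v k

/-!
Both orders are governed by the rank counts `rankCount v 0 k t = #{l < k | t ≤ v l}`. Two
non-increasing lists of equal length compare entrywise iff their threshold counts do, so the
Deodhar condition says `rankCount v 0 k t ≤ rankCount w 0 k t` for all `k, t`. A Bruhat move
`v ↦ v ∘ (i j)` raises these counts by one on the band `i < k ≤ j`, `v i < t ≤ v j` and leaves the
others unchanged. Conversely, if `v ≠ w` is dominated by `w`, then `v i < w i` at the first position
`i` where they differ, and swapping `i` with the first later position `j` with `v j ∈ (v i, w i]`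
keeps `v` dominated, because no value of `v` strictly between these positions lies in that
interval. The sum of all counts strictly increases along such moves and is bounded by that of `w`,
so iterating them reaches `w`.
-/

open Finset

theorem Relation.reflTransGen_of_potential {α : Type*} {r : α → α → Prop} {P : α → Prop}
    (f : α → ℕ) {b : α} (hle : ∀ a, P a → f a ≤ f b)
    (hstep : ∀ a, P a → a ≠ b → ∃ c, r a c ∧ P c ∧ f a < f c) {a : α} (ha : P a) :
    Relation.ReflTransGen r a b := by
  induction hgap : f b - f a using Nat.strong_induction_on generalizing a with
  | _ d ih =>
    by_cases hab : a = b
    · exact hab ▸ .refl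
    obtain ⟨c, hac, hc, hlt⟩ := hstep a ha hab
    exact .head hac (ih _ (by have := hle c hc; omega) hc rfl)

section SortedCounts

variable {α : Type*}

theorem List.Forall₂.countP_le [Preorder α] [DecidableLE α] {l m : List α}
    (h : List.Forall₂ (· ≤ ·) l m) (t : α) : l.countP (t ≤ ·) ≤ m.countP (t ≤ ·) := by
  induction h with
  | nil => rfl
  | @cons a b l m hab _ ih =>
    simp only [List.countP_cons, decide_eq_true_eq]
    have : (if t ≤ a then 1 else 0) ≤ if t ≤ b then 1 else 0 := by
      split_ifs with ha hb <;> first | omega | exact absurd (ha.trans hab) hb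
    omega

theorem List.forall₂_le_of_countP_le [LinearOrder α] :
    ∀ {l m : List α}, l.Pairwise (· ≥ ·) → m.Pairwise (· ≥ ·) → l.length = m.length →
      (∀ t, l.countP (t ≤ ·) ≤ m.countP (t ≤ ·)) → List.Forall₂ (· ≤ ·) l m
  | [], [], _, _, _, _ => .nil
  | a :: l, b :: m, hl, hm, hlen, hcount => by
    rw [List.pairwise_cons] at hl hm
    have hzero : ∀ {t : α} {k : List α}, (∀ x ∈ k, x < t) → k.countP (t ≤ ·) = 0 :=
      fun hk => List.countP_eq_zero.2 fun x hx => by simpa using hk x hx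
    have hab : a ≤ b := by
      by_contra! hba
      have := hcount a
      rw [List.countP_cons, List.countP_cons, hzero fun x hx => (hm.1 x hx).trans_lt hba] at this
      simp [not_le.2 hba] at this
    refine .cons hab (forall₂_le_of_countP_le hl.2 hm.2 (by simpa using hlen) fun t => ?_)
    by_cases hta : t ≤ a
    · have := hcount t
      simp only [List.countP_cons, decide_eq_true_eq, if_pos hta, if_pos (hta.trans hab)] at this
      omega
    · rw [hzero fun x hx => (hl.1 x hx).trans_lt (not_le.1 hta)]
      exact Nat.zero_le _

end SortedCounts

theorem contLE_iff (l m : List ℕ) :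
    contLE l m ↔ l.length = m.length ∧ ∀ t, l.countP (t ≤ ·) ≤ m.countP (t ≤ ·) := by
  have hl : (sortDesc l).Perm l := List.perm_insertionSort _ _
  have hm : (sortDesc m).Perm m := List.perm_insertionSort _ _
  refine ⟨fun h => ⟨?_, fun t => ?_⟩, fun ⟨hlen, hcount⟩ => ?_⟩
  · rw [← hl.length_eq, ← hm.length_eq]
    exact h.length_eq
  · rw [← hl.countP_eq, ← hm.countP_eq]
    exact h.countP_le t
  · refine List.forall₂_le_of_countP_le (List.pairwise_insertionSort _ _)
      (List.pairwise_insertionSort _ _) (by rw [hl.length_eq, hm.length_eq, hlen]) fun t => ?_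
    rw [hl.countP_eq, hm.countP_eq]
    exact hcount t

section RankCount

variable {n : ℕ}

def rankCount (v : Fin n → ℕ) (a b t : ℕ) : ℕ :=
  #{l : Fin n | a ≤ l.val ∧ l.val < b ∧ t ≤ v l}

theorem rankCount_add (v : Fin n → ℕ) {a b c : ℕ} (hab : a ≤ b) (hbc : b ≤ c) (t : ℕ) :
    rankCount v a b t + rankCount v b c t = rankCount v a c t := by
  simp only [rankCount, card_filter, ← sum_add_distrib]
  refine sum_congr rfl fun l _ => ?_
  split_ifs <;> omega

theorem rankCount_succ_self (v : Fin n → ℕ) (i : Fin n) (t : ℕ) :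
    rankCount v i (i + 1) t = if t ≤ v i then 1 else 0 := by
  rw [rankCount, card_filter, sum_eq_single i]
  · simp
  · intro l _ hli
    rw [if_neg fun h => hli (Fin.ext (by omega))]
  · simp

theorem rankCount_prefix_succ (v : Fin n → ℕ) (i : Fin n) (t : ℕ) :
    rankCount v 0 (i + 1) t = rankCount v 0 i t + if t ≤ v i then 1 else 0 := by
  rw [← rankCount_succ_self, rankCount_add v (Nat.zero_le _) (Nat.le_succ _)]

theorem rankCount_split (v : Fin n → ℕ) {i : Fin n} {k : ℕ} (hik : i < k) (t : ℕ) :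
    rankCount v 0 k t =
      rankCount v 0 i t + (if t ≤ v i then 1 else 0) + rankCount v (i + 1) k t := by
  rw [← rankCount_prefix_succ, rankCount_add v (Nat.zero_le _) hik]

theorem rankCount_congr {v v' : Fin n → ℕ} {a b : ℕ}
    (h : ∀ l : Fin n, a ≤ l.val → l.val < b → v' l = v l) (t : ℕ) :
    rankCount v' a b t = rankCount v a b t := by
  unfold rankCount
  congr 1
  exact filter_congr fun l _ =>
    and_congr_right fun ha => and_congr_right fun hb => by rw [h l ha hb]

theorem rankCount_antitone (v : Fin n → ℕ) (a b : ℕ) : Antitone (rankCount v a b) :=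
  fun _ _ htt' =>
    card_le_card (monotone_filter_right _ fun _ _ ⟨ha, hb, ht⟩ => ⟨ha, hb, htt'.trans ht⟩)

theorem rankCount_eq_of_gap {v : Fin n → ℕ} {a b t s : ℕ} (hts : t ≤ s)
    (hgap : ∀ l : Fin n, a ≤ l.val → l.val < b → v l < t ∨ s ≤ v l) :
    rankCount v a b t = rankCount v a b s := by
  unfold rankCount
  congr 1
  exact filter_congr fun l _ => and_congr_right fun ha => and_congr_right fun hb =>
    ⟨fun ht => (hgap l ha hb).resolve_left (not_lt.2 ht), hts.trans⟩

theorem countP_take_ofFn (v : Fin n → ℕ) (k t : ℕ) :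
    ((List.ofFn v).take k).countP (t ≤ ·) = rankCount v 0 k t := by
  have hsum : ∀ l : List ℕ, l.countP (t ≤ ·) = (l.map fun x => if t ≤ x then 1 else 0).sum := by
    intro l
    induction l with
    | nil => rfl
    | cons a l ih => simp [List.countP_cons, ih, add_comm]
  rw [hsum, List.map_take, List.map_ofFn, List.sum_take_ofFn, rankCount, card_filter,
    sum_filter]
  simp [ite_and]

theorem rankCount_eq_of_le (v : Fin n → ℕ) (a : ℕ) {b : ℕ} (hb : n ≤ b) (t : ℕ) :
    rankCount v a b t = rankCount v a n t := by
  unfold rankCount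
  congr 1
  exact filter_congr fun l _ => and_congr_right fun _ => and_congr_left fun _ => by omega

theorem rankCount_comp_swap_of_le (u : Fin n → ℕ) {i j : Fin n} {k : ℕ} (hij : i < j)
    (hki : k ≤ i) (t : ℕ) : rankCount (u ∘ Equiv.swap i j) 0 k t = rankCount u 0 k t :=
  rankCount_congr (fun l _ hl => by
    rw [Function.comp_apply, Equiv.swap_apply_of_ne_of_ne (Fin.ne_of_val_ne (by omega))
      (Fin.ne_of_val_ne (by omega))]) t

theorem rankCount_comp_swap_of_lt (u : Fin n → ℕ) {i j : Fin n} {k : ℕ} (hik : i < k)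
    (hjk : j < k) (t : ℕ) : rankCount (u ∘ Equiv.swap i j) 0 k t = rankCount u 0 k t := by
  refine card_equiv (Equiv.swap i j) fun l => ?_
  have hl : l.val < k ↔ (Equiv.swap i j l).val < k := by
    rcases eq_or_ne l i with rfl | hli
    · simp [hik, hjk]
    rcases eq_or_ne l j with rfl | hlj
    · simp [hik, hjk]
    rw [Equiv.swap_apply_of_ne_of_ne hli hlj]
  simp [hl]

theorem rankCount_comp_swap_add (u : Fin n → ℕ) {i j : Fin n} {k : ℕ} (hik : i < k)
    (hkj : k ≤ j) (t : ℕ) :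
    rankCount (u ∘ Equiv.swap i j) 0 k t + (if t ≤ u i then 1 else 0) =
      rankCount u 0 k t + (if t ≤ u j then 1 else 0) := by
  have hfix : ∀ l : Fin n, l ≠ i → l.val < k → (u ∘ Equiv.swap i j) l = u l := fun l hli hl => by
    rw [Function.comp_apply, Equiv.swap_apply_of_ne_of_ne hli (Fin.ne_of_val_ne (by omega))]
  rw [rankCount_split _ hik, rankCount_split u hik,
    rankCount_congr (fun l _ hl => hfix l (Fin.ne_of_val_ne (by omega)) (by omega)),
    rankCount_congr (a := i + 1) (fun l hl hl' => hfix l (Fin.ne_of_val_ne (by omega)) hl'),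
    Function.comp_apply, Equiv.swap_apply_left]
  ring

theorem rankCount_le_comp_swap {u : Fin n → ℕ} {i j : Fin n} (hij : i < j) (hu : u i < u j)
    (k t : ℕ) : rankCount u 0 k t ≤ rankCount (u ∘ Equiv.swap i j) 0 k t := by
  rcases le_or_gt k i with hki | hik
  · rw [rankCount_comp_swap_of_le u hij hki]
  rcases lt_or_ge (j : ℕ) k with hjk | hkj
  · rw [rankCount_comp_swap_of_lt u hik hjk]
  have := rankCount_comp_swap_add u hik hkj t
  split_ifs at this <;> omega

theorem rankCount_lt_comp_swap {u : Fin n → ℕ} {i j : Fin n} (hij : i < j) (hu : u i < u j) :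
    rankCount u 0 (i + 1) (u j) < rankCount (u ∘ Equiv.swap i j) 0 (i + 1) (u j) := by
  have := rankCount_comp_swap_add u (Nat.lt_add_one (i : ℕ)) (show (i : ℕ) + 1 ≤ j from hij) (u j)
  rw [if_neg (not_le.2 hu), if_pos le_rfl] at this
  omega

end RankCount

section RankLE

variable {n : ℕ}

theorem bruhatStep_iff {v w : Fin n → ℕ} :
    bruhatStep n v w ↔ ∃ i j : Fin n, i < j ∧ v i < v j ∧ w = v ∘ Equiv.swap i j := by
  constructor
  · rintro ⟨i, j, hij, hlt, hi, hj, hrest⟩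
    refine ⟨i, j, hij, hlt, funext fun l => ?_⟩
    rcases eq_or_ne l i with rfl | hli
    · simp [hi]
    rcases eq_or_ne l j with rfl | hlj
    · simp [hj]
    simp [Equiv.swap_apply_of_ne_of_ne hli hlj, hrest l hli hlj]
  · rintro ⟨i, j, hij, hlt, rfl⟩
    exact ⟨i, j, hij, hlt, by simp, by simp, fun l hli hlj => by
      simp [Equiv.swap_apply_of_ne_of_ne hli hlj]⟩

def RankLE (v w : Fin n → ℕ) : Prop :=
  ∀ k t, rankCount v 0 k t ≤ rankCount w 0 k t

theorem deodharLE_iff_rankLE (v w : Fin n → ℕ) : deodharLE n v w ↔ RankLE v w := by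
  simp only [deodharLE, contLE_iff, countP_take_ofFn, List.length_take, List.length_ofFn,
    true_and]
  refine ⟨fun h k t => ?_, fun h k _ => h k⟩
  rcases le_or_gt k n with hk | hk
  · exact h k hk t
  · rw [rankCount_eq_of_le v 0 hk.le, rankCount_eq_of_le w 0 hk.le]
    exact h n le_rfl t

theorem RankLE.of_reflTransGen_bruhatStep {v w : Fin n → ℕ}
    (h : Relation.ReflTransGen (bruhatStep n) v w) : RankLE v w := by
  induction h with
  | refl => exact fun k t => le_rfl
  | tail _ hstep ih =>
    obtain ⟨i, j, hij, hlt, rfl⟩ := bruhatStep_iff.1 hstep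
    exact fun k t => (ih k t).trans (rankCount_le_comp_swap hij hlt k t)

theorem RankLE.apply_lt_of_ne {v w : Fin n → ℕ} (hd : RankLE v w) {i : Fin n}
    (hlow : ∀ l : Fin n, l < i → v l = w l) (hi : v i ≠ w i) : v i < w i := by
  have hpre : rankCount v 0 i (v i) = rankCount w 0 i (v i) :=
    rankCount_congr (fun l _ hl => hlow l hl) _
  have := hd (i + 1) (v i)
  rw [rankCount_prefix_succ, rankCount_prefix_succ, hpre, if_pos le_rfl] at this
  split_ifs at this with h
  · exact lt_of_le_of_ne h hi
  · omega

theorem RankLE.rankCount_lt_of_gap {v w : Fin n → ℕ} (hd : RankLE v w) {i : Fin n}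
    (hlow : ∀ l : Fin n, l < i → v l = w l) {k t : ℕ} (hik : i < k)
    (hgap : ∀ l : Fin n, i < l → l.val < k → v l ≤ v i ∨ w i < v l) (hvt : v i < t)
    (htw : t ≤ w i) : rankCount v 0 k t < rankCount w 0 k t := by
  have hpre : ∀ s, rankCount v 0 i s = rankCount w 0 i s :=
    rankCount_congr fun l _ hl => hlow l hl
  have hs := hd k (w i + 1)
  rw [rankCount_split v hik, rankCount_split w hik, hpre, if_neg (by omega),
    if_neg (by omega)] at hs
  have hv : rankCount v (i + 1) k t = rankCount v (i + 1) k (w i + 1) :=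
    rankCount_eq_of_gap (by omega) fun l hl hlk => by rcases hgap l hl hlk with h | h <;> omega
  have hw := rankCount_antitone w (i + 1) k (show t ≤ w i + 1 by omega)
  rw [rankCount_split v hik, rankCount_split w hik, hpre, if_neg (by omega), if_pos htw, hv]
  omega

theorem RankLE.comp_swap {v w : Fin n → ℕ} (hd : RankLE v w) {i j : Fin n} (hij : i < j)
    (hband : ∀ k t : ℕ, i < k → k ≤ j → v i < t → t ≤ v j →
      rankCount v 0 k t < rankCount w 0 k t) :
    RankLE (v ∘ Equiv.swap i j) w := by
  intro k t
  rcases le_or_gt k i with hki | hik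
  · rw [rankCount_comp_swap_of_le v hij hki]
    exact hd k t
  rcases lt_or_ge (j : ℕ) k with hjk | hkj
  · rw [rankCount_comp_swap_of_lt v hik hjk]
    exact hd k t
  have hswap := rankCount_comp_swap_add v hik hkj t
  have := hd k t
  by_cases ht : v i < t ∧ t ≤ v j
  · have := hband k t hik hkj ht.1 ht.2
    rw [if_neg (by omega), if_pos ht.2] at hswap
    omega
  · split_ifs at hswap <;> omega

theorem RankLE.exists_swap {v w : Fin n → ℕ} (hd : RankLE v w) (hw : Function.Injective w)
    (hrange : Set.range w ⊆ Set.range v) (hne : v ≠ w) :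
    ∃ i j : Fin n, i < j ∧ v i < v j ∧ RankLE (v ∘ Equiv.swap i j) w := by
  obtain ⟨i, hi, hmin⟩ := wellFounded_lt.has_min {l | v l ≠ w l} (Function.ne_iff.1 hne)
  have hlow : ∀ l, l < i → v l = w l := fun l hl => not_not.1 fun h => hmin l h hl
  have hvw := hd.apply_lt_of_ne hlow hi
  obtain ⟨p, hp⟩ := hrange ⟨i, rfl⟩
  have hip : i < p := by
    rcases lt_trichotomy p i with hpi | rfl | hpi
    · exact absurd (hw ((hlow p hpi).symm.trans hp)) hpi.ne
    · exact absurd hp hi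
    · exact hpi
  -- `w i` occurs in `v` after position `i`, so the first such `j` exists
  obtain ⟨j, ⟨hij, hvij, hvj⟩, hjmin⟩ :=
    wellFounded_lt.has_min {l | i < l ∧ v i < v l ∧ v l ≤ w i} ⟨p, hip, hp ▸ hvw, hp.le⟩
  refine ⟨i, j, hij, hvij, hd.comp_swap hij fun k t hik hkj hvt htj =>
    hd.rankCount_lt_of_gap hlow hik (fun l hil hlk => ?_) hvt (htj.trans hvj)⟩
  by_contra! h
  exact hjmin l ⟨hil, h.1, h.2⟩ (show l.val < j.val by omega)

theorem RankLE.reflTransGen_bruhatStep {v w : Fin n → ℕ} (hd : RankLE v w)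
    (hw : Function.Injective w) (hrange : Set.range v = Set.range w) :
    Relation.ReflTransGen (bruhatStep n) v w := by
  let Φ : (Fin n → ℕ) → ℕ := fun u => ∑ k ∈ range (n + 1), ∑ t ∈ univ.image w, rankCount u 0 k t
  refine Relation.reflTransGen_of_potential Φ (P := fun u => Set.range u = Set.range w ∧ RankLE u w)
    ?_ ?_ ⟨hrange, hd⟩
  · rintro u ⟨-, hu⟩
    exact sum_le_sum fun k _ => sum_le_sum fun t _ => hu k t
  rintro u ⟨hu, hdu⟩ hne
  obtain ⟨i, j, hij, hlt, hd'⟩ := hdu.exists_swap hw hu.symm.subset hne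
  refine ⟨u ∘ Equiv.swap i j, bruhatStep_iff.2 ⟨i, j, hij, hlt, rfl⟩,
    ⟨by rw [EquivLike.range_comp, hu], hd'⟩, ?_⟩
  obtain ⟨l, hl⟩ := hu.subset ⟨j, rfl⟩
  refine sum_lt_sum (fun k _ => sum_le_sum fun t _ => rankCount_le_comp_swap hij hlt k t)
    ⟨i + 1, mem_range.2 (by omega), sum_lt_sum (fun t _ => rankCount_le_comp_swap hij hlt _ t)
      ⟨u j, mem_image.2 ⟨l, mem_univ _, hl⟩, rankCount_lt_comp_swap hij hlt⟩⟩

end RankLE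

theorem IsOneLine.range_eq {n : ℕ} {v : Fin n → ℕ} (hv : IsOneLine n v) :
    Set.range v = Set.Icc 1 n := by
  have himage : univ.image v = Icc 1 n := by
    refine eq_of_subset_of_card_le (fun x hx => ?_) (by rw [card_image_of_injective _ hv.2]; simp)
    obtain ⟨l, -, rfl⟩ := mem_image.1 hx
    exact mem_Icc.2 (hv.1 l)
  rw [← coe_Icc, ← himage, coe_image, coe_univ, Set.image_univ]

theorem bruhat_eq_deodhar (n : ℕ) (v w : Fin n → ℕ) (hv : IsOneLine n v)
    (hw : IsOneLine n w) :
    Relation.ReflTransGen (bruhatStep n) v w ↔ deodharLE n v w := by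
  rw [deodharLE_iff_rankLE]
  exact ⟨RankLE.of_reflTransGen_bruhatStep,
    fun h => h.reflTransGen_bruhatStep hw.2 (by rw [hv.range_eq, hw.range_eq])⟩
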